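/- Under conditional independence of C and L given X, E[δ·ε·h(X) / P(L < X < C | X)] = E[h(X)] for any integrable function h, provided P(L < X < C | X) > 0 almost surely. -/

import Mathlib

open MeasureTheory ProbabilityTheory

/-!
Since `δ ε = 1{L < X < C}` and `h(X) / P(L < X < C | X)` is `σ(X)`-measurable, pulling it
out of the conditional expectation given `X` turns `E[δ ε h(X) / P(L < X < C | X)]` into
`E[P(L < X < C | X) · h(X) / P(L < X < C | X)] = E[h(X)]`.
-/

theorem ite_lt_mul_ite_lt_min {α : Type*} [LinearOrder α] (x c l : α) :
    ((if x < c then 1 else 0) * if l < min x c then 1 else 0 : ℝ) =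
      if l < x ∧ x < c then 1 else 0 := by
  by_cases hxc : x < c
  · by_cases hlx : l < x
    · simp [hxc, hlx, hlx.trans hxc]
    · simp [hxc, hlx]
  · simp [hxc]

theorem integral_mul_div_condExp {Ω : Type*} {m m0 : MeasurableSpace Ω} {μ : Measure Ω}
    (hm : m ≤ m0) [SigmaFinite (μ.trim hm)] {g k : Ω → ℝ} (hg : Integrable g μ)
    (hk : StronglyMeasurable[m] k) (hpos : ∀ᵐ ω ∂μ, μ[g | m] ω ≠ 0)
    (hint : Integrable (fun ω => g ω * k ω / μ[g | m] ω) μ) :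
    ∫ ω, g ω * k ω / μ[g | m] ω ∂μ = ∫ ω, k ω ∂μ := by
  have hfun : g * (k / μ[g | m]) = fun ω => g ω * k ω / μ[g | m] ω := by
    ext ω; simp only [Pi.mul_apply, Pi.div_apply, mul_div_assoc]
  have hpull : μ[g * (k / μ[g | m]) | m] =ᵐ[μ] μ[g | m] * (k / μ[g | m]) :=
    condExp_mul_of_stronglyMeasurable_right (hk.div stronglyMeasurable_condExp)
      (hfun ▸ hint) hg
  have hcancel : μ[g | m] * (k / μ[g | m]) =ᵐ[μ] k := by
    filter_upwards [hpos] with ω hω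
    exact mul_div_cancel₀ (k ω) hω
  rw [← hfun, ← integral_condExp hm]
  exact integral_congr_ae (hpull.trans hcancel)

theorem ipcw_unbiased_weight_identity_general
    {Ω : Type*} [m0 : MeasurableSpace Ω] (μ : Measure Ω) [IsProbabilityMeasure μ]
    (X C L : Ω → ℝ) (hX : Measurable X) (hC : Measurable C) (hL : Measurable L)
    (h : ℝ → ℝ) (hmeas : Measurable h)
    (δ : Ω → ℝ) (hδ : δ = fun ω => if X ω < C ω then (1 : ℝ) else 0)
    (ε : Ω → ℝ) (hε : ε = fun ω => if L ω < min (X ω) (C ω) then (1 : ℝ) else 0)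
    -- p = P(L < X < C | X), the conditional probability given σ(X):
    (p : Ω → ℝ)
    (hp : p =ᵐ[μ] μ[fun ω => (if L ω < X ω ∧ X ω < C ω then (1 : ℝ) else 0) |
        MeasurableSpace.comap X inferInstance])
    (hp_pos : ∀ᵐ ω ∂μ, 0 < p ω)
    (hInt : Integrable (fun ω => δ ω * ε ω * h (X ω) / p ω) μ) :
    ∫ ω, δ ω * ε ω * h (X ω) / p ω ∂μ = ∫ ω, h (X ω) ∂μ := by
  set g : Ω → ℝ := fun ω => if L ω < X ω ∧ X ω < C ω then 1 else 0
  have hδε : ∀ ω, δ ω * ε ω = g ω := fun ω => by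
    subst hδ hε; exact ite_lt_mul_ite_lt_min _ _ _
  have hg : Integrable g μ := by
    have hg_ind : g = ({ω | L ω < X ω} ∩ {ω | X ω < C ω}).indicator 1 := by
      ext ω; simp [g, Set.indicator_apply]
    rw [hg_ind]
    exact (integrable_const 1).indicator ((measurableSet_lt hL hX).inter (measurableSet_lt hX hC))
  have hintegrand : (fun ω => δ ω * ε ω * h (X ω) / p ω) =ᵐ[μ]
      fun ω => g ω * h (X ω) / μ[g | MeasurableSpace.comap X inferInstance] ω := by
    filter_upwards [hp] with ω hω
    rw [hδε, hω]
  rw [integral_congr_ae hintegrand]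
  refine integral_mul_div_condExp hX.comap_le hg
    (hmeas.comp (Measurable.of_comap_le le_rfl)).stronglyMeasurable ?_ (hInt.congr hintegrand)
  filter_upwards [hp, hp_pos] with ω hω hpos
  exact hω ▸ hpos.ne'

/-- Under conditional independence of `C` and `L` given `X`,
`E[δ·ε·h(X) / P(L < X < C | X)] = E[h(X)]` for integrable `h`, provided
`P(L < X < C | X) > 0` almost surely. -/
theorem ipcw_unbiased_weight_identity
    {Ω : Type*} [m0 : MeasurableSpace Ω] (μ : Measure Ω) [IsProbabilityMeasure μ]
    (X C L : Ω → ℝ) (hX : Measurable X) (hC : Measurable C) (hL : Measurable L)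
    (h : ℝ → ℝ) (hmeas : Measurable h)
    (δ : Ω → ℝ) (hδ : δ = fun ω => if X ω < C ω then (1 : ℝ) else 0)
    (ε : Ω → ℝ) (hε : ε = fun ω => if L ω < min (X ω) (C ω) then (1 : ℝ) else 0)
    -- p = P(L < X < C | X), the conditional probability given σ(X):
    (p : Ω → ℝ)
    (hp : p =ᵐ[μ] μ[fun ω => (if L ω < X ω ∧ X ω < C ω then (1 : ℝ) else 0) |
        MeasurableSpace.comap X inferInstance])
    (hp_pos : ∀ᵐ ω ∂μ, 0 < p ω)
    -- conditional independence of C and L given X: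
    (hCI : (μ[fun ω => (if X ω < C ω then (1 : ℝ) else 0) *
              (if L ω < X ω then (1 : ℝ) else 0) | MeasurableSpace.comap X inferInstance])
        =ᵐ[μ] fun ω =>
          (μ[fun ω' => (if X ω' < C ω' then (1 : ℝ) else 0) |
              MeasurableSpace.comap X inferInstance]) ω *
          (μ[fun ω' => (if L ω' < X ω' then (1 : ℝ) else 0) |
              MeasurableSpace.comap X inferInstance]) ω)
    (hInt : Integrable (fun ω => δ ω * ε ω * h (X ω) / p ω) μ)
    (hInt' : Integrable (fun ω => h (X ω)) μ) :
    ∫ ω, δ ω * ε ω * h (X ω) / p ω ∂μ = ∫ ω, h (X ω) ∂μ :=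
  ipcw_unbiased_weight_identity_general (m0 := m0) μ X C L hX hC hL h hmeas δ hδ ε hε p hp hp_pos
    hInt
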